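/- arXiv:1506.07147 — 2 statements merged into one kernel-verified Lean document; each statement's English description precedes it below -/
import Mathlib

section
/- Let R be a discrete valuation ring in which 2 is invertible and let F be its field of fractions. Let G and G' be symmetric n×n matrices over R that are invertible over R (i.e., the corresponding quadratic forms are unimodular). If there exists P ∈ GL_n(F) with Pᵀ·G·P = G' (the forms become isomorphic over F), then there exists Q ∈ GL_n(R) with Qᵀ·G·Q = G' (the forms are isomorphic over R). -/
/-!
Over a valuation ring `R` with `2` invertible, a unimodular form `G` represents over `R` every
`t ∈ R` that it represents over `F`. Indeed, write a rational representation as `y / s` with `y`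
primitive and `s ∈ R`; choosing `w` with `yᵀ G w = 1`, the reflection in `y + s w` maps `y / s`
to an integral vector when `s` is not a unit. Now both forms represent a common unit `u` over `R`,
so over the local ring `R` they split as `⟨u⟩ ⊥ G₁` and `⟨u⟩ ⊥ G₁'`; Witt cancellation over `F`
(again by reflections) makes `G₁` and `G₁'` rationally congruent, and we induct on the dimension.
-/

open Matrix

namespace Matrix

section QuadraticValues

variable {ι R : Type*} [Fintype ι] [CommRing R]

theorem dotProduct_transpose_mul_mul_mulVec (Q G : Matrix ι ι R) (v w : ι → R) :
    v ⬝ᵥ (Qᵀ * G * Q) *ᵥ w = (Q *ᵥ v) ⬝ᵥ G *ᵥ (Q *ᵥ w) := by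
  rw [← mulVec_mulVec, ← mulVec_mulVec, dotProduct_mulVec, vecMul_transpose]

theorem single_one_dotProduct_mulVec_single_one [DecidableEq ι] (G : Matrix ι ι R) (i j : ι) :
    Pi.single i 1 ⬝ᵥ G *ᵥ Pi.single j 1 = G i j := by
  simp

theorem IsSymm.dotProduct_mulVec_comm {G : Matrix ι ι R} (hG : G.IsSymm) (v w : ι → R) :
    v ⬝ᵥ G *ᵥ w = w ⬝ᵥ G *ᵥ v := by
  rw [dotProduct_mulVec, ← hG.eq, vecMul_transpose, dotProduct_comm, hG.eq]

theorem smul_dotProduct_mulVec_smul (G : Matrix ι ι R) (c : R) (v : ι → R) :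
    (c • v) ⬝ᵥ G *ᵥ (c • v) = c ^ 2 * (v ⬝ᵥ G *ᵥ v) := by
  simp only [mulVec_smul, dotProduct_smul, smul_dotProduct, smul_eq_mul]
  ring

theorem map_dotProduct_mulVec {S : Type*} [CommRing S] (f : R →+* S) (G : Matrix ι ι R)
    (x : ι → R) : (f ∘ x) ⬝ᵥ G.map f *ᵥ (f ∘ x) = f (x ⬝ᵥ G *ᵥ x) := by
  rw [RingHom.map_dotProduct]
  congr 1
  ext i
  exact (RingHom.map_mulVec f G x i).symm

end QuadraticValues

section Congruence

variable {ι R : Type*} [Fintype ι] [DecidableEq ι] [CommRing R]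

def Congruent (G G' : Matrix ι ι R) : Prop :=
  ∃ Q : Matrix ι ι R, IsUnit Q ∧ Qᵀ * G * Q = G'

namespace Congruent

theorem refl (G : Matrix ι ι R) : Congruent G G :=
  ⟨1, isUnit_one, by simp⟩

theorem trans {G G' G'' : Matrix ι ι R} (h : Congruent G G') (h' : Congruent G' G'') :
    Congruent G G'' := by
  obtain ⟨Q, hQ, rfl⟩ := h
  obtain ⟨Q', hQ', rfl⟩ := h'
  exact ⟨Q * Q', hQ.mul hQ', by simp only [transpose_mul, Matrix.mul_assoc]⟩

theorem symm {G G' : Matrix ι ι R} (h : Congruent G G') : Congruent G' G := by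
  obtain ⟨Q, ⟨U, rfl⟩, rfl⟩ := h
  refine ⟨↑U⁻¹, Units.isUnit _, ?_⟩
  calc (↑U⁻¹ : Matrix ι ι R)ᵀ * ((↑U)ᵀ * G * ↑U) * ↑U⁻¹
      = (↑U * ↑U⁻¹ : Matrix ι ι R)ᵀ * G * (↑U * ↑U⁻¹) := by
        simp only [transpose_mul, Matrix.mul_assoc]
    _ = G := by simp

theorem map {S : Type*} [CommRing S] (f : R →+* S) {G G' : Matrix ι ι R} (h : Congruent G G') :
    Congruent (G.map f) (G'.map f) := by
  obtain ⟨Q, hQ, rfl⟩ := h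
  exact ⟨Q.map f, hQ.map f.mapMatrix, by simp only [← transpose_map, ← Matrix.map_mul]⟩

theorem isSymm {G G' : Matrix ι ι R} (h : Congruent G G') (hG : G.IsSymm) : G'.IsSymm := by
  obtain ⟨Q, -, rfl⟩ := h
  simp only [IsSymm, transpose_mul, transpose_transpose, hG.eq, Matrix.mul_assoc]

theorem isUnit {G G' : Matrix ι ι R} (h : Congruent G G') (hG : IsUnit G) : IsUnit G' := by
  obtain ⟨Q, hQ, rfl⟩ := h
  exact ((Q.isUnit_transpose.mpr hQ).mul hG).mul hQ

end Congruent

end Congruence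

section BlockDiagCons

variable {R : Type*} {m : ℕ}

/-- The orthogonal sum `⟨u⟩ ⊥ A`. -/
def blockDiagCons [Zero R] (u : R) (A : Matrix (Fin m) (Fin m) R) :
    Matrix (Fin (m + 1)) (Fin (m + 1)) R :=
  of (Fin.cons (Fin.cons u 0) fun i => Fin.cons 0 (A i))

section Zero
variable [Zero R] (u : R) (A : Matrix (Fin m) (Fin m) R)

@[simp] theorem blockDiagCons_zero_zero : blockDiagCons u A 0 0 = u := rfl

@[simp] theorem blockDiagCons_zero_succ (j : Fin m) : blockDiagCons u A 0 j.succ = 0 := rfl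

@[simp] theorem blockDiagCons_succ_zero (i : Fin m) : blockDiagCons u A i.succ 0 = 0 := rfl

@[simp] theorem blockDiagCons_succ_succ (i j : Fin m) :
    blockDiagCons u A i.succ j.succ = A i j := rfl

@[simp] theorem submatrix_succ_blockDiagCons :
    (blockDiagCons u A).submatrix Fin.succ Fin.succ = A := rfl

theorem transpose_blockDiagCons : (blockDiagCons u A)ᵀ = blockDiagCons u Aᵀ := by
  ext i j
  cases i using Fin.cases <;> cases j using Fin.cases <;> rfl

theorem eq_blockDiagCons {M : Matrix (Fin (m + 1)) (Fin (m + 1)) R}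
    (hrow : ∀ j : Fin m, M 0 j.succ = 0) (hcol : ∀ i : Fin m, M i.succ 0 = 0) :
    M = blockDiagCons (M 0 0) (M.submatrix Fin.succ Fin.succ) := by
  ext i j
  cases i using Fin.cases <;> cases j using Fin.cases <;> simp [hrow, hcol]

end Zero

theorem isSymm_blockDiagCons_iff [Zero R] {u : R} {A : Matrix (Fin m) (Fin m) R} :
    (blockDiagCons u A).IsSymm ↔ A.IsSymm := by
  simp only [IsSymm, transpose_blockDiagCons]
  exact ⟨fun h => by simpa using congrArg (submatrix · Fin.succ Fin.succ) h,
    fun h => by rw [h]⟩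

theorem map_blockDiagCons [Zero R] {S : Type*} [Zero S] (f : R → S) (hf : f 0 = 0) (u : R)
    (A : Matrix (Fin m) (Fin m) R) :
    (blockDiagCons u A).map f = blockDiagCons (f u) (A.map f) := by
  ext i j
  cases i using Fin.cases <;> cases j using Fin.cases <;> simp [hf]

theorem blockDiagCons_mul_blockDiagCons [NonUnitalNonAssocSemiring R] (u v : R)
    (A B : Matrix (Fin m) (Fin m) R) :
    blockDiagCons u A * blockDiagCons v B = blockDiagCons (u * v) (A * B) := by
  ext i j
  cases i using Fin.cases <;> cases j using Fin.cases <;> simp [mul_apply, Fin.sum_univ_succ]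

theorem blockDiagCons_mulVec_zero [NonUnitalNonAssocSemiring R] (u : R)
    (A : Matrix (Fin m) (Fin m) R) (v : Fin (m + 1) → R) :
    (blockDiagCons u A *ᵥ v) 0 = u * v 0 := by
  simp [mulVec, dotProduct, Fin.sum_univ_succ]

theorem det_blockDiagCons [CommRing R] (u : R) (A : Matrix (Fin m) (Fin m) R) :
    (blockDiagCons u A).det = u * A.det := by
  simp [det_succ_row_zero, Fin.sum_univ_succ]

theorem isUnit_blockDiagCons_iff [CommRing R] {u : R} {A : Matrix (Fin m) (Fin m) R} :
    IsUnit (blockDiagCons u A) ↔ IsUnit u ∧ IsUnit A := by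
  simp only [isUnit_iff_isUnit_det, det_blockDiagCons, IsUnit.mul_iff]

end BlockDiagCons

theorem congruent_blockDiagCons {R : Type*} [CommRing R] {m : ℕ} (u : R)
    {A A' : Matrix (Fin m) (Fin m) R} (h : Congruent A A') :
    Congruent (blockDiagCons u A) (blockDiagCons u A') := by
  obtain ⟨Q, hQ, rfl⟩ := h
  exact ⟨blockDiagCons 1 Q, isUnit_blockDiagCons_iff.mpr ⟨isUnit_one, hQ⟩, by
    simp only [transpose_blockDiagCons, blockDiagCons_mul_blockDiagCons, one_mul, mul_one]⟩

section Reflection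

variable {ι K : Type*} [Fintype ι] [DecidableEq ι] [Field K] {G : Matrix ι ι K}

noncomputable def reflection (G : Matrix ι ι K) (w : ι → K) : Matrix ι ι K :=
  1 - vecMulVec w ((2 / (w ⬝ᵥ G *ᵥ w)) • (w ᵥ* G))

theorem reflection_mulVec (w v : ι → K) :
    reflection G w *ᵥ v = v - (2 * (w ⬝ᵥ G *ᵥ v) / (w ⬝ᵥ G *ᵥ w)) • w := by
  rw [reflection, sub_mulVec, one_mulVec, vecMulVec_mulVec, smul_dotProduct, ← dotProduct_mulVec,
    op_smul_eq_smul, smul_eq_mul, div_mul_eq_mul_div]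

theorem det_reflection {w : ι → K} (hw : w ⬝ᵥ G *ᵥ w ≠ 0) : (reflection G w).det = -1 := by
  rw [reflection, sub_eq_add_neg, ← vecMulVec_neg, vecMulVec_eq Unit,
    det_one_add_replicateCol_mul_replicateRow, neg_dotProduct, smul_dotProduct,
    ← dotProduct_mulVec, smul_eq_mul, div_mul_cancel₀ _ hw]
  norm_num

theorem dotProduct_reflection_mulVec (hG : G.IsSymm) {w : ι → K} (hw : w ⬝ᵥ G *ᵥ w ≠ 0)
    (v v' : ι → K) :
    (reflection G w *ᵥ v) ⬝ᵥ G *ᵥ (reflection G w *ᵥ v') = v ⬝ᵥ G *ᵥ v' := by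
  simp only [reflection_mulVec, mulVec_sub, mulVec_smul, dotProduct_sub, sub_dotProduct,
    dotProduct_smul, smul_dotProduct, smul_eq_mul, hG.dotProduct_mulVec_comm v w]
  field_simp
  ring

theorem transpose_mul_mul_reflection (hG : G.IsSymm) {w : ι → K} (hw : w ⬝ᵥ G *ᵥ w ≠ 0) :
    (reflection G w)ᵀ * G * reflection G w = G := by
  ext i j
  simpa using (dotProduct_transpose_mul_mul_mulVec _ G (Pi.single i 1) (Pi.single j 1)).trans
    (dotProduct_reflection_mulVec hG hw _ _)

theorem reflection_sub_mulVec (hG : G.IsSymm) {e f : ι → K}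
    (hef : e ⬝ᵥ G *ᵥ e = f ⬝ᵥ G *ᵥ f) (h : (e - f) ⬝ᵥ G *ᵥ (e - f) ≠ 0) :
    reflection G (e - f) *ᵥ f = e := by
  have hq : (e - f) ⬝ᵥ G *ᵥ (e - f) = -2 * ((e - f) ⬝ᵥ G *ᵥ f) := by
    simp only [mulVec_sub, dotProduct_sub, sub_dotProduct, hG.dotProduct_mulVec_comm f e, hef]
    ring
  have hb : 2 * ((e - f) ⬝ᵥ G *ᵥ f) ≠ 0 := by
    rw [hq, neg_mul] at h
    exact neg_ne_zero.mp h
  rw [reflection_mulVec, hq, neg_mul, div_neg, div_self hb]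
  simp

end Reflection

section Witt

variable {K : Type*} [Field K]

theorem exists_isometry_mulVec_eq {ι : Type*} [Fintype ι] [DecidableEq ι] (h2 : (2 : K) ≠ 0)
    {G : Matrix ι ι K} (hG : G.IsSymm) {e f : ι → K} (hef : e ⬝ᵥ G *ᵥ e = f ⬝ᵥ G *ᵥ f)
    (he : e ⬝ᵥ G *ᵥ e ≠ 0) :
    ∃ S : Matrix ι ι K, IsUnit S ∧ Sᵀ * G * S = G ∧ S *ᵥ f = e := by
  have isUnit_reflection : ∀ {w}, w ⬝ᵥ G *ᵥ w ≠ 0 → IsUnit (reflection G w) := fun hw =>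
    (isUnit_iff_isUnit_det _).mpr (by rw [det_reflection hw]; exact isUnit_one.neg)
  by_cases h : (e - f) ⬝ᵥ G *ᵥ (e - f) = 0
  · -- then `q(e + f) = 4 q(e) ≠ 0`, and minus the reflection in `e + f` maps `f` to `e`
    have h' : (e - -f) ⬝ᵥ G *ᵥ (e - -f) ≠ 0 := by
      have : (e - -f) ⬝ᵥ G *ᵥ (e - -f) = 4 * (e ⬝ᵥ G *ᵥ e) := by
        simp only [mulVec_sub, mulVec_neg, dotProduct_sub, sub_dotProduct, dotProduct_neg,
          neg_dotProduct, hG.dotProduct_mulVec_comm f e] at h ⊢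
        linear_combination -h - 2 * hef
      rw [this]
      exact mul_ne_zero (by rw [show (4 : K) = 2 * 2 by norm_num]; exact mul_ne_zero h2 h2) he
    refine ⟨-reflection G (e - -f), (isUnit_reflection h').neg, ?_, ?_⟩
    · simp only [transpose_neg, Matrix.neg_mul, Matrix.mul_neg, neg_neg,
        transpose_mul_mul_reflection hG h']
    · rw [neg_mulVec, ← mulVec_neg, reflection_sub_mulVec hG ?_ h']
      rw [mulVec_neg, dotProduct_neg, neg_dotProduct, neg_neg, hef]
  · exact ⟨reflection G (e - f), isUnit_reflection h, transpose_mul_mul_reflection hG h,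
      reflection_sub_mulVec hG hef h⟩

theorem Congruent.of_blockDiagCons (h2 : (2 : K) ≠ 0) {m : ℕ} {u : K} (hu : u ≠ 0)
    {A A' : Matrix (Fin m) (Fin m) K} (hA : A.IsSymm)
    (h : Congruent (blockDiagCons u A) (blockDiagCons u A')) : Congruent A A' := by
  set M := blockDiagCons u A
  obtain ⟨P, hP, hPM⟩ := h
  obtain ⟨S, hS, hSM, hSe⟩ := exists_isometry_mulVec_eq h2 (isSymm_blockDiagCons_iff.mpr hA)
    (e := Pi.single 0 1) (f := P *ᵥ Pi.single 0 1)
    (by rw [← dotProduct_transpose_mul_mul_mulVec, hPM]; simp) (by simpa)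
  set P₂ := S * P
  have hP₂M : P₂ᵀ * M * P₂ = blockDiagCons u A' :=
    calc (S * P)ᵀ * M * (S * P) = Pᵀ * (Sᵀ * M * S) * P := by
          simp only [transpose_mul, Matrix.mul_assoc]
      _ = blockDiagCons u A' := by rw [hSM, hPM]
  have hP₂e : P₂ *ᵥ Pi.single 0 1 = Pi.single 0 1 := by rw [← mulVec_mulVec, hSe]
  have hcol : ∀ i, P₂ i 0 = (Pi.single 0 1 : Fin (m + 1) → K) i := fun i => by
    rw [← hP₂e, mulVec_single_one]; rfl
  -- `P₂` fixes `e₀`, so it preserves `e₀^⊥`: its first row vanishes off the corner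
  have hrow : ∀ j : Fin m, P₂ 0 j.succ = 0 := by
    intro j
    have := dotProduct_transpose_mul_mul_mulVec P₂ M (Pi.single 0 1) (Pi.single j.succ 1)
    rw [hP₂M, hP₂e, single_one_dotProduct, single_one_dotProduct, mulVec_single_one,
      mulVec_single_one, blockDiagCons_mulVec_zero] at this
    exact (mul_eq_zero.mp this.symm).resolve_left hu
  have hP₂ : P₂ = blockDiagCons 1 (P₂.submatrix Fin.succ Fin.succ) := by
    conv_lhs => rw [eq_blockDiagCons hrow (fun i => by simp [hcol])]
    simp [hcol]
  have hP₂u : IsUnit P₂ := hS.mul hP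
  rw [hP₂, isUnit_blockDiagCons_iff] at hP₂u
  refine ⟨P₂.submatrix Fin.succ Fin.succ, hP₂u.2, ?_⟩
  rw [hP₂, transpose_blockDiagCons, blockDiagCons_mul_blockDiagCons,
    blockDiagCons_mul_blockDiagCons] at hP₂M
  simpa using congrArg (submatrix · Fin.succ Fin.succ) hP₂M

end Witt

section LocalRing

open IsLocalRing

variable {ι R : Type*} [Fintype ι] [CommRing R]

theorem exists_isUnit_mulVec_single_eq [DecidableEq ι] {x : ι → R} {i : ι} (hx : IsUnit (x i))
    (j : ι) : ∃ Q : Matrix ι ι R, IsUnit Q ∧ Q *ᵥ Pi.single j 1 = x := by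
  refine ⟨((1 : Matrix ι ι R).updateCol i x).submatrix id (Equiv.swap j i), ?_, ?_⟩
  · rw [isUnit_iff_isUnit_det, det_permute', ← cramer_apply, cramer_one]
    exact ((Units.isUnit _).map (Int.castRingHom R)).mul hx
  · ext k
    simp

theorem exists_congruent_blockDiagCons_of_isUnit_apply_zero_zero {m : ℕ}
    {G : Matrix (Fin (m + 1)) (Fin (m + 1)) R} (hG : G.IsSymm) (h : IsUnit (G 0 0)) :
    ∃ G₁, Congruent G (blockDiagCons (G 0 0) G₁) := by
  obtain ⟨u, hu⟩ := h
  set c := (↑u⁻¹ : R) • G 0 - Pi.single 0 1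
  have hc0 : c 0 = 0 := by simp [c, ← hu]
  -- `C` is the column operation `eⱼ ↦ eⱼ - (G₀ⱼ / G₀₀) e₀`
  set C : Matrix (Fin (m + 1)) (Fin (m + 1)) R := 1 - vecMulVec (Pi.single 0 1) c
  have hCv : ∀ v, C *ᵥ v = v - (c ⬝ᵥ v) • Pi.single 0 1 := fun v => by
    rw [sub_mulVec, one_mulVec, vecMulVec_mulVec, op_smul_eq_smul]
  have hC0 : C *ᵥ Pi.single 0 1 = Pi.single 0 1 := by
    rw [hCv, dotProduct_single_one, hc0, zero_smul, sub_zero]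
  have hCu : IsUnit C := by
    show IsUnit (1 - vecMulVec (Pi.single 0 1) c)
    rw [isUnit_iff_isUnit_det, sub_eq_add_neg, ← vecMulVec_neg, vecMulVec_eq Unit,
      det_one_add_replicateCol_mul_replicateRow, neg_dotProduct, dotProduct_single_one, hc0]
    simp
  set H := Cᵀ * G * C
  have hH : H.IsSymm := Congruent.isSymm ⟨C, hCu, rfl⟩ hG
  have hH0 : ∀ j, H 0 j = Pi.single 0 1 ⬝ᵥ G *ᵥ (C *ᵥ Pi.single j 1) := fun j => by
    rw [← single_one_dotProduct_mulVec_single_one H, dotProduct_transpose_mul_mul_mulVec, hC0]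
  have hrow : ∀ j : Fin m, H 0 j.succ = 0 := fun j => by
    rw [hH0, hCv]
    simp [c, mulVec_sub, mulVec_smul, ← hu]
    linear_combination -G 0 j.succ * u.inv_mul
  have h00 : H 0 0 = G 0 0 := by rw [hH0, hC0, single_one_dotProduct_mulVec_single_one]
  refine ⟨H.submatrix Fin.succ Fin.succ, C, hCu, ?_⟩
  rw [← h00]
  exact eq_blockDiagCons hrow fun i => (hH.apply 0 i.succ).trans (hrow i)

variable [IsLocalRing R] {G : Matrix ι ι R}

theorem exists_isUnit_apply_of_isUnit_dotProduct_mulVec {x : ι → R}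
    (h : IsUnit (x ⬝ᵥ G *ᵥ x)) : ∃ i, IsUnit (x i) := by
  by_contra! hx
  refine (mem_maximalIdeal _).mp ?_ h
  exact Ideal.sum_mem _ fun i _ => Ideal.mul_mem_right _ _ ((mem_maximalIdeal _).mpr (hx i))

theorem exists_isUnit_dotProduct_mulVec [DecidableEq ι] [Nonempty ι] (h2 : IsUnit (2 : R))
    (hG : G.IsSymm) (hGu : IsUnit G) : ∃ x, IsUnit (x ⬝ᵥ G *ᵥ x) := by
  obtain ⟨i, j, hij⟩ : ∃ i j, IsUnit (G i j) := by
    by_contra! h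
    have h0 : G.map (residue R) = 0 := by
      ext i j
      simpa [residue_eq_zero_iff] using h i j
    have := hGu.map (residue R).mapMatrix
    rw [RingHom.mapMatrix_apply, h0] at this
    exact not_isUnit_zero this
  by_contra! h
  set e : ι → ι → R := fun k => Pi.single k 1
  have hpolar : 2 * G i j =
      (e i + e j) ⬝ᵥ G *ᵥ (e i + e j) - e i ⬝ᵥ G *ᵥ e i - e j ⬝ᵥ G *ᵥ e j := by
    simp only [e, mulVec_add, dotProduct_add, add_dotProduct,
      single_one_dotProduct_mulVec_single_one, hG.apply i j]
    ring
  have hmem : ∀ x, x ⬝ᵥ G *ᵥ x ∈ maximalIdeal R := fun x => (mem_maximalIdeal _).mpr (h x)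
  exact (mem_maximalIdeal _).mp (hpolar ▸ sub_mem (sub_mem (hmem _) (hmem _)) (hmem _))
    (h2.mul hij)

theorem exists_congruent_blockDiagCons {m : ℕ} {G : Matrix (Fin (m + 1)) (Fin (m + 1)) R}
    (hG : G.IsSymm) {x : Fin (m + 1) → R} (hx : IsUnit (x ⬝ᵥ G *ᵥ x)) :
    ∃ G₁, Congruent G (blockDiagCons (x ⬝ᵥ G *ᵥ x) G₁) := by
  obtain ⟨i, hi⟩ := exists_isUnit_apply_of_isUnit_dotProduct_mulVec hx
  obtain ⟨Q, hQ, hQx⟩ := exists_isUnit_mulVec_single_eq hi 0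
  have hGQ : Congruent G (Qᵀ * G * Q) := ⟨Q, hQ, rfl⟩
  have h00 : (Qᵀ * G * Q) 0 0 = x ⬝ᵥ G *ᵥ x := by
    rw [← single_one_dotProduct_mulVec_single_one (Qᵀ * G * Q),
      dotProduct_transpose_mul_mul_mulVec, hQx]
  obtain ⟨G₁, hG₁⟩ := exists_congruent_blockDiagCons_of_isUnit_apply_zero_zero (hGQ.isSymm hG)
    (h00 ▸ hx)
  exact ⟨G₁, hGQ.trans (h00 ▸ hG₁)⟩

theorem exists_dotProduct_mulVec_eq_of_eq_mul_sq (h2 : IsUnit (2 : R)) (hG : G.IsSymm)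
    {y w : ι → R} {s t : R} (hy : y ⬝ᵥ G *ᵥ y = t * s ^ 2) (hyw : y ⬝ᵥ G *ᵥ w = 1) :
    ∃ x, x ⬝ᵥ G *ᵥ x = t := by
  by_cases hs : IsUnit s
  · obtain ⟨s, rfl⟩ := hs
    refine ⟨(↑s⁻¹ : R) • y, ?_⟩
    rw [smul_dotProduct_mulVec_smul, hy]
    linear_combination t * (↑s⁻¹ * ↑s + 1) * s.inv_mul
  · have hD : IsUnit (2 + s * (t + w ⬝ᵥ G *ᵥ w)) := by
      by_contra hD
      refine (mem_maximalIdeal _).mp ?_ h2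
      simpa using sub_mem ((mem_maximalIdeal _).mpr hD)
        (Ideal.mul_mem_right (t + w ⬝ᵥ G *ᵥ w) _ ((mem_maximalIdeal _).mpr hs))
    obtain ⟨d, hd⟩ := hD.exists_right_inv
    -- the image of `y / s` under the reflection in `y + s w`, which is integral
    refine ⟨d • ((w ⬝ᵥ G *ᵥ w - t) • y - (2 * (t * s + 1)) • w), ?_⟩
    rw [smul_dotProduct_mulVec_smul]
    simp only [mulVec_smul, mulVec_sub, dotProduct_smul, smul_dotProduct, dotProduct_sub,
      sub_dotProduct, smul_eq_mul, hy, hyw, hG.dotProduct_mulVec_comm w y]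
    linear_combination t * ((2 + s * (t + w ⬝ᵥ G *ᵥ w)) * d + 1) * hd

end LocalRing

section ValuationRing

variable {R F : Type*} [CommRing R] [IsDomain R] [ValuationRing R] [Field F] [Algebra R F]
  [IsFractionRing R F]

theorem exists_eq_smul_algebraMap_comp {ι : Type*} [Finite ι] {a : ι → F} (ha : a ≠ 0) :
    ∃ (c : F) (y : ι → R) (i : ι), y i = 1 ∧ a = c • (algebraMap R F ∘ y) := by
  obtain ⟨j, hj⟩ := Function.ne_iff.mp ha
  have : Nonempty ι := ⟨j⟩
  set v := ValuationRing.valuation R F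
  obtain ⟨i, hi⟩ := Finite.exists_max fun k => v (a k)
  have hai : a i ≠ 0 := fun h =>
    hj <| v.zero_iff.mp <| le_antisymm (by simpa [h] using hi j) zero_le
  have hint : ∀ k, ∃ r : R, algebraMap R F r = a k / a i := fun k =>
    (ValuationRing.mem_integer_iff R F _).mp <| by
      rw [Valuation.mem_integer_iff, map_div₀, div_le_one₀ (v.pos_iff.mpr hai)]
      exact hi k
  choose y hy using hint
  refine ⟨a i, y, i, IsFractionRing.injective R F (by rw [hy, div_self hai, map_one]), ?_⟩
  ext k
  simp [hy, mul_div_cancel₀ _ hai]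

theorem exists_dotProduct_mulVec_eq_of_map {ι : Type*} [Fintype ι] [DecidableEq ι]
    (h2 : IsUnit (2 : R)) {G : Matrix ι ι R} (hG : G.IsSymm) (hGu : IsUnit G) {t : R}
    {a : ι → F} (ha : a ⬝ᵥ G.map (algebraMap R F) *ᵥ a = algebraMap R F t) :
    ∃ x, x ⬝ᵥ G *ᵥ x = t := by
  have hinj := IsFractionRing.injective R F
  rcases eq_or_ne a 0 with rfl | ha0
  · exact ⟨0, hinj (by simpa using ha)⟩
  obtain ⟨c, y, i, hyi, rfl⟩ := exists_eq_smul_algebraMap_comp (R := R) ha0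
  rw [smul_dotProduct_mulVec_smul, map_dotProduct_mulVec] at ha
  rcases ValuationRing.isInteger_or_isInteger R c with ⟨c, rfl⟩ | ⟨s, hs⟩
  · refine ⟨c • y, hinj ?_⟩
    rw [smul_dotProduct_mulVec_smul, map_mul, map_pow, ha]
  · have hc : c ≠ 0 := by rintro rfl; simp at ha0
    refine exists_dotProduct_mulVec_eq_of_eq_mul_sq h2 hG (y := y) (s := s)
      (w := G⁻¹ *ᵥ Pi.single i 1) (hinj ?_) ?_
    · rw [map_mul, map_pow, hs, ← ha]
      field_simp
    · rw [mulVec_mulVec, mul_nonsing_inv _ ((isUnit_iff_isUnit_det G).mp hGu), one_mulVec,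
        dotProduct_single_one, hyi]

end ValuationRing

theorem congruent_of_congruent_map_algebraMap {R F : Type*} [CommRing R] [IsDomain R]
    [ValuationRing R] [Field F] [Algebra R F] [IsFractionRing R F] (h2 : IsUnit (2 : R)) {m : ℕ}
    {G G' : Matrix (Fin m) (Fin m) R} (hG : G.IsSymm) (hG' : G'.IsSymm) (hGu : IsUnit G)
    (hG'u : IsUnit G')
    (h : Congruent (G.map (algebraMap R F)) (G'.map (algebraMap R F))) : Congruent G G' := by
  induction m with
  | zero => exact Subsingleton.elim G G' ▸ Congruent.refl G
  | succ m ih =>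
    obtain ⟨x', hx'⟩ := exists_isUnit_dotProduct_mulVec h2 hG' hG'u
    obtain ⟨G'₁, hG'₁⟩ := exists_congruent_blockDiagCons hG' hx'
    set u := x' ⬝ᵥ G' *ᵥ x'
    obtain ⟨x, hx⟩ : ∃ x, x ⬝ᵥ G *ᵥ x = u := by
      obtain ⟨P, -, hP⟩ := h
      refine exists_dotProduct_mulVec_eq_of_map h2 hG hGu (a := P *ᵥ (algebraMap R F ∘ x')) ?_
      rw [← dotProduct_transpose_mul_mul_mulVec, hP, map_dotProduct_mulVec]
    obtain ⟨G₁, hG₁⟩ := exists_congruent_blockDiagCons hG (hx ▸ hx')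
    rw [hx] at hG₁
    have hG₁s := isSymm_blockDiagCons_iff.mp (hG₁.isSymm hG)
    have hG'₁s := isSymm_blockDiagCons_iff.mp (hG'₁.isSymm hG')
    have hG₁u := (isUnit_blockDiagCons_iff.mp (hG₁.isUnit hGu)).2
    have hG'₁u := (isUnit_blockDiagCons_iff.mp (hG'₁.isUnit hG'u)).2
    have h2F : (2 : F) ≠ 0 := by simpa only [map_ofNat] using (h2.map (algebraMap R F)).ne_zero
    have hF : Congruent (G₁.map (algebraMap R F)) (G'₁.map (algebraMap R F)) := by
      refine Congruent.of_blockDiagCons h2F (hx'.map (algebraMap R F)).ne_zero (hG₁s.map _) ?_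
      simpa [map_blockDiagCons] using (hG₁.map _).symm.trans (h.trans (hG'₁.map _))
    exact hG₁.trans ((congruent_blockDiagCons u (ih hG₁s hG'₁s hG₁u hG'₁u hF)).trans hG'₁.symm)

end Matrix

/-- **Unimodular quadratic forms over a DVR that become isomorphic over the fraction field
are isomorphic.**  Let `R` be a discrete valuation ring with `2` invertible and `F` its
fraction field.  If `G, G'` are symmetric matrices over `R`, invertible over `R`, and there is
`P ∈ GL_n(F)` with `Pᵀ G P = G'` (over `F`), then there is `Q ∈ GL_n(R)` with `Qᵀ G Q = G'`. -/
theorem unimodular_quadratic_forms_rationally_isomorphic_iff_isomorphic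
    {R F : Type*} [CommRing R] [IsDomain R] [IsDiscreteValuationRing R]
    [Field F] [Algebra R F] [IsFractionRing R F]
    (h2 : IsUnit (2 : R)) {n : ℕ}
    (G G' : Matrix (Fin n) (Fin n) R) (hG : G.IsSymm) (hG' : G'.IsSymm)
    (hGunit : IsUnit G) (hG'unit : IsUnit G')
    (hrat : ∃ P : Matrix (Fin n) (Fin n) F, IsUnit P ∧
      Pᵀ * G.map (algebraMap R F) * P = G'.map (algebraMap R F)) :
    ∃ Q : Matrix (Fin n) (Fin n) R, IsUnit Q ∧ Qᵀ * G * Q = G' :=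
  congruent_of_congruent_map_algebraMap h2 hG hG' hGunit hG'unit hrat
end

section
/- Let R be a semilocal principal ideal domain and let Γ be a finite group whose order is invertible in R. Then a right module M over the group algebra R[Γ] is semisimple as an R[Γ]-module if and only if it is semisimple as an R-module. -/
/-!
Averaging over `Γ` (possible since `|Γ|` is invertible) turns an `R`-linear projection onto an
`R[Γ]`-submodule into an `R[Γ]`-linear one, so semisimplicity over `R` passes to `R[Γ]`.
Conversely, a simple `R[Γ]`-module is finitely generated over `R`, and multiplication by an
element of the Jacobson radical `J` of `R` is an `R[Γ]`-endomorphism of it which, by Nakayama,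
is not surjective, hence zero by Schur. So `J` kills every semisimple `R[Γ]`-module, which is then
a module over `R ⧸ J`; as `R` is semilocal, `R ⧸ J` is a finite product of fields.
-/

open scoped Pointwise

section Jacobson

variable {R A : Type*} [CommRing R] [Ring A] [Algebra R A] [Module.Finite R A]

theorem jacobson_le_annihilator_of_isSimpleModule {S : Type*} [AddCommGroup S] [Module A S]
    [Module R S] [IsScalarTower R A S] [IsSimpleModule A S] :
    Ring.jacobson R ≤ Module.annihilator R S := by
  intro r hr
  rw [Module.mem_annihilator]
  have : Module.Finite R S := .trans A S
  have := IsSimpleModule.nontrivial A S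
  obtain hbij | hzero := LinearMap.bijective_or_eq_zero (DistribSMul.toLinearMap A S r)
  · have hsurj : (⊤ : Submodule R S) = r • ⊤ := by
      rw [Submodule.pointwise_smul_def, Submodule.map_top, eq_comm, LinearMap.range_eq_top]
      exact hbij.2
    exact (Submodule.top_ne_pointwise_smul_of_mem_jacobson_annihilator
      (Ideal.jacobson_mono bot_le ((Ideal.jacobson_bot (R := R)).symm ▸ hr)) hsurj).elim
  · exact fun x => LinearMap.congr_fun hzero x

theorem jacobson_le_annihilator_of_isSemisimpleModule {M : Type*} [AddCommGroup M] [Module A M]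
    [Module R M] [IsScalarTower R A M] [IsSemisimpleModule A M] :
    Ring.jacobson R ≤ Module.annihilator R M := by
  intro r hr
  suffices ⊤ ≤ LinearMap.ker (DistribSMul.toLinearMap A M r) from
    Module.mem_annihilator.mpr fun x => this Submodule.mem_top
  rw [← IsSemisimpleModule.sSup_simples_eq_top, sSup_le_iff]
  intro S (hS : IsSimpleModule A S) x hx
  exact congrArg Subtype.val <| Module.mem_annihilator.mp
    (jacobson_le_annihilator_of_isSimpleModule (A := A) (S := S) hr) ⟨x, hx⟩

end Jacobson

section Semilocal

variable {R : Type*} [CommRing R]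

theorem isSemisimpleRing_quotient_jacobson (hR : {I : Ideal R | I.IsMaximal}.Finite) :
    IsSemisimpleRing (R ⧸ Ring.jacobson R) := by
  have : Finite {I : Ideal R | I.IsMaximal} := hR.to_subtype
  have (I : {I : Ideal R | I.IsMaximal}) : I.1.IsMaximal := I.2
  have (I : {I : Ideal R | I.IsMaximal}) : IsSemisimpleRing (R ⧸ I.1) :=
    let _ := Ideal.Quotient.field I.1; inferInstance
  rw [Ring.jacobson_eq_sInf_isMaximal, sInf_eq_iInf']
  exact (Ideal.quotientInfRingEquivPiQuotient _ fun I J ne ↦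
    Ideal.isCoprime_of_isMaximal <| Subtype.coe_ne_coe.mpr ne).symm.isSemisimpleRing

theorem isSemisimpleModule_of_jacobson_le_annihilator (hR : {I : Ideal R | I.IsMaximal}.Finite)
    {M : Type*} [AddCommGroup M] [Module R M] (h : Ring.jacobson R ≤ Module.annihilator R M) :
    IsSemisimpleModule R M := by
  have := isSemisimpleRing_quotient_jacobson hR
  have hM : Module.IsTorsionBySet R M (Ring.jacobson R) :=
    fun x r => Module.mem_annihilator.mp (h r.2) x
  let _ := hM.module
  exact hM.isSemisimpleModule_iff.mp inferInstance

end Semilocal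

namespace MonoidAlgebra

variable {k G : Type*} [CommRing k] [Group G]

theorem isSemisimpleModule_of_isUnit_card [Finite G] (hG : IsUnit (Nat.card G : k))
    {V : Type*} [AddCommGroup V] [Module k V] [Module k[G] V]
    [IsScalarTower k k[G] V] [IsSemisimpleModule k V] :
    IsSemisimpleModule k[G] V where
  exists_isCompl p := by
    have := Fintype.ofFinite G
    obtain ⟨q, hq⟩ := exists_isCompl (p.restrictScalars k)
    let π : V →ₗ[k] p := (p.restrictScalars k).projectionOnto q hq
    have hπ (x : p) : π (p.subtype x) = x := Submodule.projectionOnto_apply_left hq x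
    exact ⟨LinearMap.ker (π.equivariantProjection G), LinearMap.isCompl_of_proj
      (π.equivariantProjection_condition G p.subtype hG hπ)⟩

variable (k G) in
/-- Induced by `g ↦ g⁻¹`; it turns right `k[G]`-modules into left ones. -/
noncomputable def opAlgEquiv : k[G]ᵐᵒᵖ ≃ₐ[k] k[G] :=
  .ofRingEquiv (f := MonoidAlgebra.opRingEquiv.trans <|
    (mapRingEquiv _ (RingEquiv.toOpposite k).symm).trans
      (mapDomainRingEquiv k (MulEquiv.inv' G).symm))
    fun r => by simp

theorem isSemisimpleModule_op_of_isUnit_card [Finite G] (hG : IsUnit (Nat.card G : k))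
    {V : Type*} [AddCommGroup V] [Module k V] [Module k[G]ᵐᵒᵖ V]
    [IsScalarTower k k[G]ᵐᵒᵖ V] [IsSemisimpleModule k V] :
    IsSemisimpleModule k[G]ᵐᵒᵖ V := by
  let e := (opAlgEquiv k G).symm.toRingEquiv
  let _ : Module k[G] V := .compHom V (e : k[G] →+* k[G]ᵐᵒᵖ)
  have : IsScalarTower k k[G] V := ⟨fun r a x => by
    show (opAlgEquiv k G).symm (r • a) • x = _
    rw [map_smul, smul_assoc]
    rfl⟩
  let l : V →ₛₗ[(e : k[G] →+* k[G]ᵐᵒᵖ)] V :=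
    { toFun := id, map_add' := fun _ _ => rfl, map_smul' := fun _ _ => rfl }
  exact (l.isSemisimpleModule_iff_of_bijective Function.bijective_id).mp
    (isSemisimpleModule_of_isUnit_card hG)

end MonoidAlgebra

theorem semisimple_over_group_algebra_iff_semisimple_over_base_general
    {R : Type*} [CommRing R]
    (hsemilocal : {I : Ideal R | I.IsMaximal}.Finite)
    {Γ : Type*} [Group Γ] [Finite Γ] (hΓ : IsUnit ((Nat.card Γ : R)))
    {M : Type*} [AddCommGroup M] [Module (MonoidAlgebra R Γ)ᵐᵒᵖ M]
    [Module R M] [IsScalarTower R (MonoidAlgebra R Γ)ᵐᵒᵖ M] :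
    IsSemisimpleModule (MonoidAlgebra R Γ)ᵐᵒᵖ M ↔ IsSemisimpleModule R M := by
  refine ⟨fun _ => ?_, fun _ => MonoidAlgebra.isSemisimpleModule_op_of_isUnit_card hΓ⟩
  exact isSemisimpleModule_of_jacobson_le_annihilator hsemilocal
    (jacobson_le_annihilator_of_isSemisimpleModule (A := (MonoidAlgebra R Γ)ᵐᵒᵖ))

/-- **Semisimplicity over `R[Γ]` versus semisimplicity over `R`.**  Let `R` be a semilocal
principal ideal domain (a PID with finitely many maximal ideals) and `Γ` a finite group whose
order is invertible in `R`.  A right `R[Γ]`-module `M` is semisimple over `R[Γ]` if and only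
if it is semisimple over `R`. -/
theorem semisimple_over_group_algebra_iff_semisimple_over_base
    {R : Type*} [CommRing R] [IsDomain R] [IsPrincipalIdealRing R]
    (hsemilocal : {I : Ideal R | I.IsMaximal}.Finite)
    {Γ : Type*} [Group Γ] [Finite Γ] (hΓ : IsUnit ((Nat.card Γ : R)))
    {M : Type*} [AddCommGroup M] [Module (MonoidAlgebra R Γ)ᵐᵒᵖ M]
    [Module R M] [IsScalarTower R (MonoidAlgebra R Γ)ᵐᵒᵖ M] :
    IsSemisimpleModule (MonoidAlgebra R Γ)ᵐᵒᵖ M ↔ IsSemisimpleModule R M :=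
  semisimple_over_group_algebra_iff_semisimple_over_base_general hsemilocal hΓ
end
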